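/- Let n ≥ 1 and let C_x and C_z be cyclic ZMod 2-submodules of (Fin n → ZMod 2) with C_x⊥ ⊆ C_z, both of minimum distance at least 3. Let H_x and H_z be parity check matrices of C_x and C_z respectively (matrices over ZMod 2 with n columns whose kernels equal C_x and C_z). Then for every l ∈ {0, 1, …, n−1}, the syndrome map (p, q) ↦ (H_z·L(v_p, l), H_x·L(v_q, l)) is injective on {0, 1, …, n−1} × {0, 1, …, n−1}. (This is the main theorem of the paper stated in syndrome form: the consecutive error product set E^P_{l,n} is distinguishable by the CSS code constructed from C_x and C_z.) -/

import Mathlib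

/-- The consecutive tail vector `v_p`: indicator of the last `p` coordinates. -/
def tailVec (n p : ℕ) : Fin n → ZMod 2 := fun j => if n - p ≤ j.val then 1 else 0

/-- Left cyclic shift by `l` of a vector `v : Fin n → ZMod 2`. -/
def shiftL {n : ℕ} (v : Fin n → ZMod 2) (l : ℕ) : Fin n → ZMod 2 :=
  fun j => v ⟨(j.val + l) % n, Nat.mod_lt _ j.pos⟩

/-- A code is cyclic if it is invariant under left cyclic shifts. -/
def IsCyclicCode {n : ℕ} (C : Submodule (ZMod 2) (Fin n → ZMod 2)) : Prop :=
  ∀ v ∈ C, ∀ l : ℕ, shiftL v l ∈ C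

/-- The dual code `C⊥` with respect to the standard bilinear form. -/
def dualCode {n : ℕ} (C : Submodule (ZMod 2) (Fin n → ZMod 2)) :
    Submodule (ZMod 2) (Fin n → ZMod 2) where
  carrier := {u | ∀ w ∈ C, ∑ j, u j * w j = 0}
  add_mem' := by
    intro a b ha hb w hw
    simp only [Set.mem_setOf_eq, Pi.add_apply, add_mul] at *
    rw [Finset.sum_add_distrib, ha w hw, hb w hw, add_zero]
  zero_mem' := by
    intro w hw
    simp
  smul_mem' := by
    intro c a ha w hw
    simp only [Set.mem_setOf_eq, Pi.smul_apply, smul_eq_mul, mul_assoc] at *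
    rw [← Finset.mul_sum, ha w hw, mul_zero]

/-!
If shifted tail vectors `v_p ≠ v_q` had equal syndromes, their sum would lie in the cyclic code,
hence so would the unshifted `v_p + v_q`, the indicator of a run of consecutive coordinates.
Adding to a run its cyclic shift by one cancels everything except the two endpoints of the run,
which gives a codeword of weight 2 and contradicts minimum distance 3.
-/

lemma hammingNorm_single_add_single_le {ι β : Type*} [Fintype ι] [DecidableEq ι]
    [AddMonoid β] [DecidableEq β] (i j : ι) (x y : β) :
    hammingNorm (Pi.single i x + Pi.single j y : ι → β) ≤ 2 := by
  have hsupp : ({k | (Pi.single i x + Pi.single j y : ι → β) k ≠ 0} : Finset ι) ⊆ {i, j} := by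
    intro k hk
    rw [Finset.mem_filter] at hk
    by_contra hkij
    simp only [Finset.mem_insert, Finset.mem_singleton, not_or] at hkij
    simp [hkij.1, hkij.2] at hk
  exact (Finset.card_le_card hsupp).trans Finset.card_le_two

section

variable {n : ℕ}

lemma shiftL_add (v w : Fin n → ZMod 2) (l : ℕ) :
    shiftL (v + w) l = shiftL v l + shiftL w l := rfl

lemma shiftL_shiftL (v : Fin n → ZMod 2) (a b : ℕ) :
    shiftL (shiftL v a) b = shiftL v (b + a) := by
  funext j
  simp only [shiftL, Nat.mod_add_mod, Nat.add_assoc]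

lemma shiftL_eq_self_of_dvd (v : Fin n → ZMod 2) {l : ℕ} (h : n ∣ l) : shiftL v l = v := by
  obtain ⟨k, rfl⟩ := h
  funext j
  simp only [shiftL, Nat.add_mul_mod_self_left, Nat.mod_eq_of_lt j.isLt]

lemma IsCyclicCode.shiftL_mem_iff {C : Submodule (ZMod 2) (Fin n → ZMod 2)} (hC : IsCyclicCode C)
    {v : Fin n → ZMod 2} (l : ℕ) : shiftL v l ∈ C ↔ v ∈ C := by
  refine ⟨fun h => ?_, fun h => hC v h l⟩
  obtain rfl | hn := n.eq_zero_or_pos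
  · rwa [Subsingleton.elim v (shiftL v l)]
  · have h' := hC _ h ((n - 1) * l)
    rwa [shiftL_shiftL, shiftL_eq_self_of_dvd] at h'
    exact ⟨l, by rw [← Nat.succ_mul, Nat.succ_eq_add_one, Nat.sub_add_cancel hn]⟩

lemma tailVec_add_shiftL_one {p : ℕ} (hp : p < n) :
    tailVec n p + shiftL (tailVec n p) 1 =
      Pi.single ⟨n - 1 - p, by omega⟩ 1 + Pi.single ⟨n - 1, by omega⟩ 1 := by
  funext ⟨j, hj⟩
  rcases Nat.lt_or_ge (j + 1) n with hj1 | hj1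
  · simp only [Pi.add_apply, tailVec, shiftL, Nat.mod_eq_of_lt hj1, Pi.single_apply, Fin.ext_iff]
    split_ifs <;> first | omega | decide
  · have hjn : j + 1 = n := by omega
    simp only [Pi.add_apply, tailVec, shiftL, hjn, Nat.mod_self, Pi.single_apply, Fin.ext_iff]
    split_ifs <;> first | omega | decide

lemma tailVec_add_tailVec_notMem {C : Submodule (ZMod 2) (Fin n → ZMod 2)} (hC : IsCyclicCode C)
    (hd : ∀ w ∈ C, w ≠ 0 → 3 ≤ hammingNorm w) {p q : ℕ} (hp : p < n) (hq : q < n)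
    (hpq : p ≠ q) : tailVec n p + tailVec n q ∉ C := by
  intro hmem
  set w := tailVec n p + tailVec n q
  have hs : w + shiftL w 1 =
      Pi.single ⟨n - 1 - p, by omega⟩ 1 + Pi.single ⟨n - 1 - q, by omega⟩ 1 := by
    rw [shiftL_add]
    linear_combination (tailVec_add_shiftL_one hp) + (tailVec_add_shiftL_one hq) +
      ZModModule.add_self (Pi.single ⟨n - 1, by omega⟩ 1 : Fin n → ZMod 2)
  have hne : w + shiftL w 1 ≠ 0 := by
    intro h0
    have := congrFun (hs.symm.trans h0) ⟨n - 1 - p, by omega⟩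
    simp [Fin.ext_iff, show n - 1 - p ≠ n - 1 - q by omega] at this
  have := hd _ (C.add_mem hmem (hC w hmem 1)) hne
  have := hammingNorm_single_add_single_le (⟨n - 1 - p, by omega⟩ : Fin n) ⟨n - 1 - q, by omega⟩
    (1 : ZMod 2) 1
  rw [hs] at *
  omega

lemma mulVec_eq_mulVec_iff_add_mem {r : ℕ} {C : Submodule (ZMod 2) (Fin n → ZMod 2)}
    {H : Matrix (Fin r) (Fin n) (ZMod 2)} (hH : ∀ e : Fin n → ZMod 2, H.mulVec e = 0 ↔ e ∈ C)
    {x y : Fin n → ZMod 2} : H.mulVec x = H.mulVec y ↔ x + y ∈ C := by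
  rw [← hH, ← ZModModule.sub_eq_add, Matrix.mulVec_sub, sub_eq_zero]

lemma injOn_mulVec_shiftL_tailVec {r : ℕ} {C : Submodule (ZMod 2) (Fin n → ZMod 2)}
    (hC : IsCyclicCode C) (hd : ∀ w ∈ C, w ≠ 0 → 3 ≤ hammingNorm w)
    {H : Matrix (Fin r) (Fin n) (ZMod 2)} (hH : ∀ e : Fin n → ZMod 2, H.mulVec e = 0 ↔ e ∈ C)
    (l : ℕ) : Set.InjOn (fun p => H.mulVec (shiftL (tailVec n p) l)) (Set.Iio n) := by
  intro p hp q hq hpq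
  by_contra hne
  refine tailVec_add_tailVec_notMem hC hd hp hq hne ?_
  rwa [← hC.shiftL_mem_iff l, shiftL_add, ← mulVec_eq_mulVec_iff_add_mem hH]

end

theorem stmt6_general (n rx rz : ℕ)
    (Cx Cz : Submodule (ZMod 2) (Fin n → ZMod 2))
    (hCx : IsCyclicCode Cx) (hCz : IsCyclicCode Cz)
    (hdx : ∀ w ∈ Cx, w ≠ 0 → 3 ≤ hammingNorm w)
    (hdz : ∀ w ∈ Cz, w ≠ 0 → 3 ≤ hammingNorm w)
    (Hx : Matrix (Fin rx) (Fin n) (ZMod 2)) (Hz : Matrix (Fin rz) (Fin n) (ZMod 2))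
    (hHx : ∀ e : Fin n → ZMod 2, Hx.mulVec e = 0 ↔ e ∈ Cx)
    (hHz : ∀ e : Fin n → ZMod 2, Hz.mulVec e = 0 ↔ e ∈ Cz) :
    ∀ l < n,
      Set.InjOn
        (fun pq : ℕ × ℕ =>
          (Hz.mulVec (shiftL (tailVec n pq.1) l), Hx.mulVec (shiftL (tailVec n pq.2) l)))
        (Set.Iio n ×ˢ Set.Iio n) :=
  fun l _ => (injOn_mulVec_shiftL_tailVec hCz hdz hHz l).prodMap
    (injOn_mulVec_shiftL_tailVec hCx hdx hHx l)

theorem stmt6 (n rx rz : ℕ) (hn : 1 ≤ n)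
    (Cx Cz : Submodule (ZMod 2) (Fin n → ZMod 2))
    (hCx : IsCyclicCode Cx) (hCz : IsCyclicCode Cz)
    (hsub : dualCode Cx ≤ Cz)
    (hdx : ∀ w ∈ Cx, w ≠ 0 → 3 ≤ hammingNorm w)
    (hdz : ∀ w ∈ Cz, w ≠ 0 → 3 ≤ hammingNorm w)
    (Hx : Matrix (Fin rx) (Fin n) (ZMod 2)) (Hz : Matrix (Fin rz) (Fin n) (ZMod 2))
    (hHx : ∀ e : Fin n → ZMod 2, Hx.mulVec e = 0 ↔ e ∈ Cx)
    (hHz : ∀ e : Fin n → ZMod 2, Hz.mulVec e = 0 ↔ e ∈ Cz) :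
    ∀ l < n,
      Set.InjOn
        (fun pq : ℕ × ℕ =>
          (Hz.mulVec (shiftL (tailVec n pq.1) l), Hx.mulVec (shiftL (tailVec n pq.2) l)))
        (Set.Iio n ×ˢ Set.Iio n) :=
  stmt6_general n rx rz Cx Cz hCx hCz hdx hdz Hx Hz hHx hHz
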